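/- arXiv:0710.4376 — 9 statements merged into one kernel-verified Lean document; each statement's English description precedes it below -/
import Mathlib

section
/- Let K be a field and let A be the K-subalgebra of the polynomial ring K[x,y] generated by the monomials x^a · y^(α−a) for a ∈ 𝒜. Let 𝔪 be the ideal of A generated by the monomials x^a · y^(α−a), a ∈ 𝒜, and let 𝔮 be the ideal of A generated by x^α and y^α. Then for every r ∈ ℕ one has 𝔪^(r+1) = 𝔮·𝔪^r if and only if (r+1)𝒜 = {0, α} + r𝒜. Consequently, the reduction number of 𝔪 with respect to 𝔮, i.e. min{r ∈ ℕ : 𝔪^(r+1) = 𝔮·𝔪^r}, equals min{r ∈ ℕ : (r+1)𝒜 = {0, α} + r𝒜}. -/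
open scoped Pointwise

/-- The `m`-fold sumset of a finite set `A ⊆ ℕ`, with `0 • A = {0}`. -/
def sumset (A : Finset ℕ) : ℕ → Finset ℕ
  | 0 => {0}
  | m + 1 => sumset A m + A

/-- A subset of `ℕ` is full iff it equals `{0, 1, …, n}` for some `n`. -/
def IsFull (B : Finset ℕ) : Prop := ∃ n : ℕ, B = Finset.Iic n

/-- `{i, …, j}` is a gap of `B`: disjoint from `B`, with `i - 1 ∈ B` and `j + 1 ∈ B`. -/
def IsGap (B : Finset ℕ) (i j : ℕ) : Prop :=
  1 ≤ i ∧ i ≤ j ∧ (∀ k, i ≤ k → k ≤ j → k ∉ B) ∧ i - 1 ∈ B ∧ j + 1 ∈ B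

/-- `λ(B)`: the maximal length of a gap of `B` (`0` if there are no gaps). -/
noncomputable def gapLen (B : Finset ℕ) : ℕ :=
  sSup {n | ∃ i j, IsGap B i j ∧ n = j - i + 1}

/-- Property `(P₁)`. -/
def P1 (A : Finset ℕ) (α : ℕ) : Prop :=
  ∀ m : ℕ, ¬ IsFull (sumset A m) → ¬ IsFull (sumset A m + ({0, α} : Finset ℕ))

/-- Property `(P₂)`. -/
def P2 (A : Finset ℕ) (α : ℕ) : Prop :=
  ∀ m : ℕ, ¬ IsFull (sumset A m) →
    ¬ ((∀ k, k ≤ α → k ∈ sumset A m) ∧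
       (∀ k, (m - 1) * α ≤ k → k ≤ m * α → k ∈ sumset A m))

/-- The combinatorial reduction number `r(𝒜)`. -/
noncomputable def rA (A : Finset ℕ) (α : ℕ) : ℕ :=
  sInf {r : ℕ | sumset A (r + 1) = ({0, α} : Finset ℕ) + sumset A r}

/-- The combinatorial regularity `reg(𝒜)`. -/
noncomputable def regA (A : Finset ℕ) : ℕ :=
  sInf {m : ℕ | 1 ≤ m ∧ IsFull (sumset A m)}

section Aux
open MvPolynomial

lemma sumset_le {A : Finset ℕ} {α : ℕ} (hA : ∀ a ∈ A, a ≤ α) :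
    ∀ m, ∀ s ∈ sumset A m, s ≤ m * α := by
  intro m
  induction m with
  | zero => intro s hs; simp [sumset] at hs; omega
  | succ n ih =>
    intro s hs
    rw [sumset, Finset.mem_add] at hs
    obtain ⟨u, hu, a, ha, rfl⟩ := hs
    have := ih u hu; have := hA a ha
    have : (n+1)*α = n*α + α := by ring
    omega

section Mono
variable (K : Type*) [Field K]

def Gset (A : Subalgebra K (MvPolynomial (Fin 2) K)) (N : ℕ) (S : Finset ℕ) : Set A :=
  {z | ∃ s ∈ S, (z : MvPolynomial (Fin 2) K) = X 0 ^ s * X 1 ^ (N - s)}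

lemma mono_mul (s t N M : ℕ) (hs : s ≤ N) (ht : t ≤ M) :
    (X 0 ^ s * X 1 ^ (N - s)) * (X 0 ^ t * X 1 ^ (M - t))
      = (X 0 ^ (s+t) * X 1 ^ ((N+M) - (s+t)) : MvPolynomial (Fin 2) K) := by
  have h : (N - s) + (M - t) = (N + M) - (s + t) := by omega
  rw [mul_mul_mul_comm, ← pow_add, ← pow_add, h]

lemma Gset_mul (A : Subalgebra K (MvPolynomial (Fin 2) K)) (N M : ℕ) (S T : Finset ℕ)
    (hS : ∀ s ∈ S, s ≤ N) (hT : ∀ t ∈ T, t ≤ M)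
    (hSA : ∀ s ∈ S, (X 0 ^ s * X 1 ^ (N - s) : MvPolynomial (Fin 2) K) ∈ A)
    (hTA : ∀ t ∈ T, (X 0 ^ t * X 1 ^ (M - t) : MvPolynomial (Fin 2) K) ∈ A) :
    Gset K A N S * Gset K A M T = Gset K A (N + M) (S + T) := by
  ext z
  constructor
  · rintro ⟨z1, ⟨s, hs, h1⟩, z2, ⟨t, ht, h2⟩, rfl⟩
    exact ⟨s + t, Finset.add_mem_add hs ht, by
      push_cast [h1, h2]; exact mono_mul K s t N M (hS s hs) (hT t ht)⟩
  · rintro ⟨u, hu, hz⟩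
    rw [Finset.mem_add] at hu
    obtain ⟨s, hs, t, ht, rfl⟩ := hu
    refine ⟨⟨_, hSA s hs⟩, ⟨s, hs, rfl⟩, ⟨_, hTA t ht⟩, ⟨t, ht, rfl⟩, ?_⟩
    apply Subtype.ext
    push_cast [hz]
    exact mono_mul K s t N M (hS s hs) (hT t ht)

set_option synthInstance.maxHeartbeats 1000000 in
set_option maxHeartbeats 1000000 in
lemma extract (A : Subalgebra K (MvPolynomial (Fin 2) K)) (N : ℕ) (S T : Finset ℕ)
    (hT : ∀ t ∈ T, t ≤ N) (s : ℕ) (hs : s ∈ S) (hsN : s ≤ N)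
    (hsA : (X 0 ^ s * X 1 ^ (N - s) : MvPolynomial (Fin 2) K) ∈ A)
    (h : Ideal.span (Gset K A N S) ≤ Ideal.span (Gset K A N T)) : s ∈ T := by
  by_contra hsT
  set z : A := ⟨_, hsA⟩ with hz
  have hzmem : z ∈ Ideal.span (Gset K A N T) :=
    h (Ideal.subset_span ⟨s, hs, rfl⟩)
  rw [Ideal.span, Submodule.mem_span_set] at hzmem
  obtain ⟨c, hsupp, hsum⟩ := hzmem
  set d : Fin 2 →₀ ℕ := Finsupp.single 0 s + Finsupp.single 1 (N - s) with hd
  have hzc : (z : MvPolynomial (Fin 2) K) = monomial d 1 := by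
    rw [hz]
    simp [X_pow_eq_monomial, monomial_mul, hd]
  have h1 : coeff d (z : MvPolynomial (Fin 2) K) = 1 := by
    rw [hzc, coeff_monomial]; simp
  have h0 : coeff d (z : MvPolynomial (Fin 2) K) = 0 := by
    rw [← hsum]
    rw [Finsupp.sum]
    push_cast
    rw [coeff_sum]
    apply Finset.sum_eq_zero
    intro g hg
    obtain ⟨t, ht, hgt⟩ := hsupp hg
    have hgc : (g : MvPolynomial (Fin 2) K)
        = monomial (Finsupp.single 0 t + Finsupp.single 1 (N - t)) 1 := by
      rw [hgt]; simp [X_pow_eq_monomial, monomial_mul]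
    rw [smul_eq_mul]
    push_cast
    rw [hgc, coeff_mul_monomial']
    rw [if_neg]
    intro hle
    have h0' : t ≤ s := by
      have := hle 0
      simpa [hd, Finsupp.single_apply] using this
    have h1' : N - t ≤ N - s := by
      have := hle 1
      simpa [hd, Finsupp.single_apply] using this
    have := hT t ht
    have : t = s := by omega
    exact hsT (this ▸ ht)
  rw [h1] at h0
  exact one_ne_zero h0

end Mono

section Main
variable {K : Type*} [Field K]

lemma mono_mem_adjoin (𝒜 : Finset ℕ) (α : ℕ) (hb : ∀ a ∈ 𝒜, a ≤ α) :
    ∀ m, ∀ s ∈ sumset 𝒜 m,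
      (X 0 ^ s * X 1 ^ (m * α - s) : MvPolynomial (Fin 2) K) ∈
        Algebra.adjoin K {p : MvPolynomial (Fin 2) K | ∃ a ∈ 𝒜, p = X 0 ^ a * X 1 ^ (α - a)} := by
  intro m
  induction m with
  | zero =>
    intro s hs
    simp only [sumset, Finset.mem_singleton] at hs
    subst hs
    simpa using one_mem _
  | succ n ih =>
    intro s hs
    rw [sumset, Finset.mem_add] at hs
    obtain ⟨u, hu, a, ha, rfl⟩ := hs
    have h1 : ((n+1) : ℕ) * α = n * α + α := by ring
    rw [h1, ← mono_mul K u a (n*α) α (sumset_le hb n u hu) (hb a ha)]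
    exact mul_mem (ih u hu) (Algebra.subset_adjoin ⟨a, ha, rfl⟩)

set_option synthInstance.maxHeartbeats 1000000 in
set_option maxHeartbeats 1000000 in
lemma pow_span (A : Subalgebra K (MvPolynomial (Fin 2) K)) (𝒜 : Finset ℕ) (α : ℕ)
    (hb : ∀ a ∈ 𝒜, a ≤ α)
    (hmem : ∀ m, ∀ s ∈ sumset 𝒜 m,
      (X 0 ^ s * X 1 ^ (m * α - s) : MvPolynomial (Fin 2) K) ∈ A)
    (𝔪 : Ideal A) (h𝔪 : 𝔪 = Ideal.span (Gset K A α 𝒜)) :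
    ∀ m, 𝔪 ^ m = Ideal.span (Gset K A (m * α) (sumset 𝒜 m)) := by
  intro m
  induction m with
  | zero =>
    rw [pow_zero]
    symm
    rw [Ideal.one_eq_top, Ideal.eq_top_iff_one]
    apply Ideal.subset_span
    exact ⟨0, by simp [sumset], by simp⟩
  | succ n ih =>
    rw [pow_succ, ih, h𝔪, Ideal.span_mul_span',
      Gset_mul K A (n*α) α (sumset 𝒜 n) 𝒜 (sumset_le hb n) hb
        (hmem n) (by
          have h2 : sumset 𝒜 1 = 𝒜 := by ext x; simp [sumset, Finset.mem_add]
          simpa [h2] using hmem 1)]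
    have h1 : ((n+1) : ℕ) * α = n * α + α := by ring
    rw [show sumset 𝒜 (n+1) = sumset 𝒜 n + 𝒜 from rfl, h1]

end Main


end Aux

set_option synthInstance.maxHeartbeats 1000000 in
set_option maxHeartbeats 1000000 in
open MvPolynomial in
/-- For the monomial curve algebra, `𝔪^(r+1) = 𝔮·𝔪^r ↔ (r+1)𝒜 = {0,α} + r𝒜`, and hence the
reduction number of `𝔪` with respect to `𝔮` equals `min {r | (r+1)𝒜 = {0,α} + r𝒜}`. -/
theorem stmt_0 (K : Type*) [Field K] (𝒜 : Finset ℕ) (hne : 𝒜.Nonempty) (h0 : 0 ∈ 𝒜)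
    (α : ℕ) (hα : α = 𝒜.max' hne) (hα2 : 2 ≤ α)
    (A : Subalgebra K (MvPolynomial (Fin 2) K))
    (hA : A = Algebra.adjoin K
      {p : MvPolynomial (Fin 2) K | ∃ a ∈ 𝒜, p = X 0 ^ a * X 1 ^ (α - a)})
    (𝔪 𝔮 : Ideal A)
    (h𝔪 : 𝔪 = Ideal.span
      {z : A | ∃ a ∈ 𝒜, (z : MvPolynomial (Fin 2) K) = X 0 ^ a * X 1 ^ (α - a)})
    (h𝔮 : 𝔮 = Ideal.span
      {z : A | (z : MvPolynomial (Fin 2) K) = X 0 ^ α ∨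
               (z : MvPolynomial (Fin 2) K) = X 1 ^ α}) :
    (∀ r : ℕ, 𝔪 ^ (r + 1) = 𝔮 * 𝔪 ^ r ↔
        sumset 𝒜 (r + 1) = ({0, α} : Finset ℕ) + sumset 𝒜 r) ∧
    sInf {r : ℕ | 𝔪 ^ (r + 1) = 𝔮 * 𝔪 ^ r} =
      sInf {r : ℕ | sumset 𝒜 (r + 1) = ({0, α} : Finset ℕ) + sumset 𝒜 r} := by
  
  have hb : ∀ a ∈ 𝒜, a ≤ α := fun a ha => hα ▸ Finset.le_max' 𝒜 a ha
  have hαm : α ∈ 𝒜 := hα ▸ Finset.max'_mem 𝒜 hne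
  have hmem : ∀ m, ∀ s ∈ sumset 𝒜 m,
      (X 0 ^ s * X 1 ^ (m * α - s) : MvPolynomial (Fin 2) K) ∈ A := by
    rw [hA]; exact mono_mem_adjoin 𝒜 α hb
  have hsum1 : sumset 𝒜 1 = 𝒜 := by ext x; simp [sumset, Finset.mem_add]
  have h𝔪' : 𝔪 = Ideal.span (Gset K A α 𝒜) := h𝔪
  have hpow := pow_span A 𝒜 α hb hmem 𝔪 h𝔪'
  have h𝔮' : 𝔮 = Ideal.span (Gset K A α ({0, α} : Finset ℕ)) := by
    rw [h𝔮]
    congr 1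
    ext z
    simp only [Set.mem_setOf_eq, Gset, Finset.mem_insert, Finset.mem_singleton]
    constructor
    · rintro (h | h)
      · exact ⟨α, Or.inr rfl, by simp [h]⟩
      · exact ⟨0, Or.inl rfl, by simp [h]⟩
    · rintro ⟨s, (rfl | rfl), h⟩
      · exact Or.inr (by simpa using h)
      · exact Or.inl (by simpa using h)
  have hb2 : ∀ s ∈ ({0, α} : Finset ℕ), s ≤ α := by
    intro s hs; simp at hs; omega
  have hmem2 : ∀ s ∈ ({0, α} : Finset ℕ),
      (X 0 ^ s * X 1 ^ (α - s) : MvPolynomial (Fin 2) K) ∈ A := by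
    intro s hs
    simp only [Finset.mem_insert, Finset.mem_singleton] at hs
    have : s ∈ 𝒜 := by rcases hs with rfl | rfl <;> assumption
    simpa using hmem 1 s (by rwa [hsum1])
  have hTsub : ∀ r : ℕ, ({0, α} : Finset ℕ) + sumset 𝒜 r ⊆ sumset 𝒜 (r + 1) := by
    intro r t ht
    rw [Finset.mem_add] at ht
    obtain ⟨e, he, u, hu, rfl⟩ := ht
    have he' : e ∈ 𝒜 := by
      simp only [Finset.mem_insert, Finset.mem_singleton] at he
      rcases he with rfl | rfl <;> assumption
    rw [show sumset 𝒜 (r+1) = sumset 𝒜 r + 𝒜 from rfl, Finset.mem_add]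
    exact ⟨u, hu, e, he', add_comm u e⟩
  have hQm : ∀ r : ℕ, 𝔮 * 𝔪 ^ r =
      Ideal.span (Gset K A ((r + 1) * α) (({0, α} : Finset ℕ) + sumset 𝒜 r)) := by
    intro r
    rw [h𝔮', hpow r, Ideal.span_mul_span',
      Gset_mul K A α (r * α) ({0, α}) (sumset 𝒜 r) hb2 (sumset_le hb r) hmem2 (hmem r)]
    have h1 : α + r * α = (r + 1) * α := by ring
    rw [h1]
  have key : ∀ r : ℕ, 𝔪 ^ (r + 1) = 𝔮 * 𝔪 ^ r ↔
      sumset 𝒜 (r + 1) = ({0, α} : Finset ℕ) + sumset 𝒜 r := by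
    intro r
    rw [hpow (r + 1), hQm r]
    constructor
    · intro h
      have hTb : ∀ t ∈ ({0, α} : Finset ℕ) + sumset 𝒜 r, t ≤ (r + 1) * α :=
        fun t ht => sumset_le hb (r + 1) t (hTsub r ht)
      have hSb : ∀ t ∈ sumset 𝒜 (r + 1), t ≤ (r + 1) * α := sumset_le hb (r + 1)
      apply Finset.Subset.antisymm
      · intro s hs
        exact extract K A ((r + 1) * α) (sumset 𝒜 (r + 1)) _ hTb s hs (hSb s hs)
          (hmem (r + 1) s hs) h.le
      · intro s hs
        exact extract K A ((r + 1) * α) _ (sumset 𝒜 (r + 1)) hSb s hs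
          (hTb s hs) (hmem (r + 1) s (hTsub r hs)) h.ge
    · intro h; rw [h]
  exact ⟨key, congrArg sInf (Set.ext fun r => key r)⟩
end

section
/- Assume 𝒜 is smooth. Let S be the additive submonoid of ℤ² generated by the vectors (a, α−a) for a ∈ 𝒜, and let G be the subgroup of ℤ² generated by these vectors. Then S − ℕ·(α,0) := {u ∈ ℤ² : u + n·(α,0) ∈ S for some n ∈ ℕ} equals {u = (u₁,u₂) ∈ G : u₂ ≥ 0}, and symmetrically S − ℕ·(0,α) := {u ∈ ℤ² : u + n·(0,α) ∈ S for some n ∈ ℕ} equals {u = (u₁,u₂) ∈ G : u₁ ≥ 0}. -/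
/-!
Smoothness puts `(α, 0)`, `(α - 1, 1)`, `(0, α)` and `(1, α - 1)` into `S`. Every generator
`(a, α - a)` has coordinate sum `α`, so each `u ∈ G` has `α ∣ u₁ + u₂` and hence
`u = u₂ • (α - 1, 1) + m • (α, 0)` for some `m ∈ ℤ`; when `u₂ ≥ 0`, adding `max (-m) 0` copies
of `(α, 0)` makes both coefficients nonnegative, so the result lies in `S`. Conversely `S` lies in
the nonnegative quadrant and `(α, 0)` does not change `u₂`. The second identity is the same
argument with the coordinates exchanged.
-/

open scoped Pointwise

def lineGens (𝒜 : Finset ℕ) (α : ℕ) : Set (ℤ × ℤ) :=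
  {v | ∃ a ∈ 𝒜, v = ((a : ℤ), (α : ℤ) - (a : ℤ))}

section RayLocalization

variable {M : Type*} [AddCommGroup M] {S : AddSubmonoid M} {e f u : M}

theorem exists_add_nsmul_mem_of_eq_zsmul_add_zsmul (he : e ∈ S) (hf : f ∈ S) {k m : ℤ}
    (hk : 0 ≤ k) (hu : u = k • f + m • e) : ∃ n : ℕ, u + n • e ∈ S := by
  refine ⟨(-m).toNat, ?_⟩
  have hmn : u + (-m).toNat • e = k.toNat • f + (m + (-m).toNat).toNat • e := by
    rw [← natCast_zsmul, ← natCast_zsmul, ← natCast_zsmul, Int.toNat_of_nonneg hk,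
      Int.toNat_of_nonneg (show 0 ≤ m + ((-m).toNat : ℤ) by omega), add_zsmul, hu]
    abel
  rw [hmn]
  exact S.add_mem (S.nsmul_mem hf _) (S.nsmul_mem he _)

theorem setOf_exists_add_nsmul_mem_eq (G : AddSubgroup M) (p : M →+ ℤ)
    (he : e ∈ S) (hf : f ∈ S) (hSG : S ≤ G.toAddSubmonoid) (hSp : ∀ v ∈ S, 0 ≤ p v)
    (hpe : p e = 0) (hG : ∀ u ∈ G, ∃ m : ℤ, u = p u • f + m • e) :
    {u | ∃ n : ℕ, u + n • e ∈ S} = {u | u ∈ G ∧ 0 ≤ p u} := by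
  ext u
  constructor
  · rintro ⟨n, hn⟩
    refine ⟨?_, ?_⟩
    · simpa using G.sub_mem (hSG hn) (G.nsmul_mem (hSG he) n)
    · simpa [hpe] using hSp _ hn
  · rintro ⟨huG, hpu⟩
    obtain ⟨m, hm⟩ := hG u huG
    exact exists_add_nsmul_mem_of_eq_zsmul_add_zsmul he hf hpu hm

end RayLocalization

theorem closure_lineGens_le_nonneg {𝒜 : Finset ℕ} {α : ℕ} (hle : ∀ a ∈ 𝒜, a ≤ α) :
    AddSubmonoid.closure (lineGens 𝒜 α) ≤ AddSubmonoid.nonneg (ℤ × ℤ) := by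
  rw [AddSubmonoid.closure_le]
  rintro _ ⟨a, ha, rfl⟩
  have := hle a ha
  simp only [SetLike.mem_coe, AddSubmonoid.mem_nonneg, Prod.le_def, Prod.fst_zero,
    Prod.snd_zero]
  omega

theorem dvd_fst_add_snd_of_mem_closure_lineGens {𝒜 : Finset ℕ} {α : ℕ} {u : ℤ × ℤ}
    (hu : u ∈ AddSubgroup.closure (lineGens 𝒜 α)) : (α : ℤ) ∣ u.1 + u.2 := by
  induction hu using AddSubgroup.closure_induction with
  | mem x hx =>
    obtain ⟨a, -, rfl⟩ := hx
    simp
  | zero => simp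
  | add x y _ _ hx hy =>
    simpa only [Prod.fst_add, Prod.snd_add, add_add_add_comm] using dvd_add hx hy
  | neg x _ hx =>
    simpa only [Prod.fst_neg, Prod.snd_neg, neg_add] using hx.neg_right

theorem eq_snd_zsmul_add_zsmul_of_dvd {α : ℤ} {u : ℤ × ℤ} (h : α ∣ u.1 + u.2) :
    ∃ m : ℤ, u = u.2 • (α - 1, 1) + m • (α, 0) := by
  obtain ⟨t, ht⟩ := h
  refine ⟨t - u.2, Prod.ext ?_ ?_⟩ <;>
    simp only [Prod.fst_add, Prod.snd_add, Prod.smul_fst, Prod.smul_snd, smul_eq_mul] <;> linarith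

theorem eq_fst_zsmul_add_zsmul_of_dvd {α : ℤ} {u : ℤ × ℤ} (h : α ∣ u.1 + u.2) :
    ∃ m : ℤ, u = u.1 • (1, α - 1) + m • (0, α) := by
  obtain ⟨t, ht⟩ := h
  refine ⟨t - u.1, Prod.ext ?_ ?_⟩ <;>
    simp only [Prod.fst_add, Prod.snd_add, Prod.smul_fst, Prod.smul_snd, smul_eq_mul] <;> linarith

theorem stmt_1_general (𝒜 : Finset ℕ) (hne : 𝒜.Nonempty) (h0 : 0 ∈ 𝒜)
    (α : ℕ) (hα : α = 𝒜.max' hne)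
    (h1 : 1 ∈ 𝒜) (hαm1 : α - 1 ∈ 𝒜)
    (S : AddSubmonoid (ℤ × ℤ))
    (hS : S = AddSubmonoid.closure {v : ℤ × ℤ | ∃ a ∈ 𝒜, v = ((a : ℤ), (α : ℤ) - (a : ℤ))})
    (G : AddSubgroup (ℤ × ℤ))
    (hG : G = AddSubgroup.closure {v : ℤ × ℤ | ∃ a ∈ 𝒜, v = ((a : ℤ), (α : ℤ) - (a : ℤ))}) :
    {u : ℤ × ℤ | ∃ n : ℕ, u + n • (((α : ℤ), (0 : ℤ)) : ℤ × ℤ) ∈ S} =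
      {u : ℤ × ℤ | u ∈ G ∧ 0 ≤ u.2} ∧
    {u : ℤ × ℤ | ∃ n : ℕ, u + n • (((0 : ℤ), (α : ℤ)) : ℤ × ℤ) ∈ S} =
      {u : ℤ × ℤ | u ∈ G ∧ 0 ≤ u.1} := by
  subst hS hG
  have hle : ∀ a ∈ 𝒜, a ≤ α := fun a ha => hα ▸ 𝒜.le_max' a ha
  have hgen : ∀ a ∈ 𝒜, ((a : ℤ), (α : ℤ) - (a : ℤ)) ∈ AddSubmonoid.closure (lineGens 𝒜 α) :=
    fun a ha => AddSubmonoid.subset_closure ⟨a, ha, rfl⟩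
  have hSG := AddSubgroup.le_closure_toAddSubmonoid (lineGens 𝒜 α)
  have hSnn := closure_lineGens_le_nonneg hle
  have hα1 : 1 ≤ α := hle 1 h1
  constructor
  · have he := hgen α (hα ▸ 𝒜.max'_mem hne)
    have hf := hgen (α - 1) hαm1
    simp only [sub_self] at he
    push_cast [hα1, sub_sub_cancel] at hf
    exact setOf_exists_add_nsmul_mem_eq _ (AddMonoidHom.snd ℤ ℤ) he hf hSG
      (fun v hv => (hSnn hv).2) rfl
      (fun u hu => eq_snd_zsmul_add_zsmul_of_dvd (dvd_fst_add_snd_of_mem_closure_lineGens hu))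
  · have he := hgen 0 h0
    have hf := hgen 1 h1
    simp only [Nat.cast_zero, sub_zero, Nat.cast_one] at he hf
    exact setOf_exists_add_nsmul_mem_eq _ (AddMonoidHom.fst ℤ ℤ) he hf hSG
      (fun v hv => (hSnn hv).1) rfl
      (fun u hu => eq_fst_zsmul_add_zsmul_of_dvd (dvd_fst_add_snd_of_mem_closure_lineGens hu))

/-- For smooth `𝒜`: `S − ℕ·(α,0) = {u ∈ G | u₂ ≥ 0}` and `S − ℕ·(0,α) = {u ∈ G | u₁ ≥ 0}`. -/
theorem stmt_1 (𝒜 : Finset ℕ) (hne : 𝒜.Nonempty) (h0 : 0 ∈ 𝒜)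
    (α : ℕ) (hα : α = 𝒜.max' hne) (hα2 : 2 ≤ α)
    (h1 : 1 ∈ 𝒜) (hαm1 : α - 1 ∈ 𝒜)
    (S : AddSubmonoid (ℤ × ℤ))
    (hS : S = AddSubmonoid.closure {v : ℤ × ℤ | ∃ a ∈ 𝒜, v = ((a : ℤ), (α : ℤ) - (a : ℤ))})
    (G : AddSubgroup (ℤ × ℤ))
    (hG : G = AddSubgroup.closure {v : ℤ × ℤ | ∃ a ∈ 𝒜, v = ((a : ℤ), (α : ℤ) - (a : ℤ))}) :
    {u : ℤ × ℤ | ∃ n : ℕ, u + n • (((α : ℤ), (0 : ℤ)) : ℤ × ℤ) ∈ S} =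
      {u : ℤ × ℤ | u ∈ G ∧ 0 ≤ u.2} ∧
    {u : ℤ × ℤ | ∃ n : ℕ, u + n • (((0 : ℤ), (α : ℤ)) : ℤ × ℤ) ∈ S} =
      {u : ℤ × ℤ | u ∈ G ∧ 0 ≤ u.1} :=
  stmt_1_general 𝒜 hne h0 α hα h1 hαm1 S hS G hG
end

section
/- Assume 𝒜 is smooth. Let S be the additive submonoid of ℤ² generated by the vectors (a, α−a) for a ∈ 𝒜, and let G be the subgroup of ℤ² generated by these vectors. Then (S − ℕ·(α,0)) ∩ (S − ℕ·(0,α)) = G ∩ ℕ², where S − ℕ·v := {u ∈ ℤ² : u + n·v ∈ S for some n ∈ ℕ}. -/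
open scoped Pointwise

/-- Auxiliary: the nonnegative quadrant as an additive submonoid of `ℤ × ℤ`. -/
def nnQuad : AddSubmonoid (ℤ × ℤ) where
  carrier := {v | 0 ≤ v.1 ∧ 0 ≤ v.2}
  add_mem' := fun ha hb => ⟨add_nonneg ha.1 hb.1, add_nonneg ha.2 hb.2⟩
  zero_mem' := ⟨le_refl 0, le_refl 0⟩

/-- For smooth `𝒜`: `(S − ℕ·(α,0)) ∩ (S − ℕ·(0,α)) = G ∩ ℕ²`. -/
theorem stmt_2 (𝒜 : Finset ℕ) (hne : 𝒜.Nonempty) (h0 : 0 ∈ 𝒜)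
    (α : ℕ) (hα : α = 𝒜.max' hne) (hα2 : 2 ≤ α)
    (h1 : 1 ∈ 𝒜) (hαm1 : α - 1 ∈ 𝒜)
    (S : AddSubmonoid (ℤ × ℤ))
    (hS : S = AddSubmonoid.closure {v : ℤ × ℤ | ∃ a ∈ 𝒜, v = ((a : ℤ), (α : ℤ) - (a : ℤ))})
    (G : AddSubgroup (ℤ × ℤ))
    (hG : G = AddSubgroup.closure {v : ℤ × ℤ | ∃ a ∈ 𝒜, v = ((a : ℤ), (α : ℤ) - (a : ℤ))}) :
    {u : ℤ × ℤ | ∃ n : ℕ, u + n • (((α : ℤ), (0 : ℤ)) : ℤ × ℤ) ∈ S} ∩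
      {u : ℤ × ℤ | ∃ n : ℕ, u + n • (((0 : ℤ), (α : ℤ)) : ℤ × ℤ) ∈ S} =
    {u : ℤ × ℤ | u ∈ G ∧ 0 ≤ u.1 ∧ 0 ≤ u.2} := by

  have hαmem : α ∈ 𝒜 := hα ▸ Finset.max'_mem 𝒜 hne
  set V : Set (ℤ × ℤ) := {v : ℤ × ℤ | ∃ a ∈ 𝒜, v = ((a : ℤ), (α : ℤ) - (a : ℤ))} with hV
  -- generators in S
  have hvα : (((α:ℤ),(0:ℤ)) : ℤ×ℤ) ∈ S := by
    rw [hS]; exact AddSubmonoid.subset_closure ⟨α, hαmem, by simp⟩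
  have hv0 : (((0:ℤ),(α:ℤ)) : ℤ×ℤ) ∈ S := by
    rw [hS]; exact AddSubmonoid.subset_closure ⟨0, h0, by simp⟩
  have hv1 : (((1:ℤ),(α:ℤ)-1) : ℤ×ℤ) ∈ S := by
    rw [hS]; exact AddSubmonoid.subset_closure ⟨1, h1, by simp⟩
  have hcast : ((α - 1 : ℕ) : ℤ) = (α:ℤ) - 1 := by
    have h1α : 1 ≤ α := by omega
    push_cast [Nat.cast_sub h1α]; ring
  have hvα1 : (((α:ℤ)-1,(1:ℤ)) : ℤ×ℤ) ∈ S := by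
    rw [hS]; refine AddSubmonoid.subset_closure ⟨α-1, hαm1, ?_⟩
    rw [hcast]; ring_nf
  -- S is contained in the nonnegative quadrant
  have hSle : ∀ v ∈ S, 0 ≤ v.1 ∧ 0 ≤ v.2 := by
    have : S ≤ nnQuad := by
      rw [hS]
      apply AddSubmonoid.closure_le.2
      rintro v ⟨a, ha, rfl⟩
      have hle : a ≤ α := hα ▸ Finset.le_max' 𝒜 a ha
      exact ⟨Int.natCast_nonneg a, sub_nonneg.2 (by exact_mod_cast hle)⟩
    exact fun v hv => this hv
  -- S ⊆ G
  have hSG : ∀ v ∈ S, v ∈ G := by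
    have : AddSubmonoid.closure V ≤ G.toAddSubmonoid :=
      AddSubmonoid.closure_le.2 (by rw [hG]; exact AddSubgroup.subset_closure)
    intro v hv; rw [hS] at hv; exact this hv
  -- divisibility condition for G
  have hdiv : ∀ v ∈ G, (α:ℤ) ∣ v.1 + v.2 := by
    intro v hv
    rw [hG] at hv
    have hle : AddSubgroup.closure V ≤ (AddSubgroup.zmultiples (α:ℤ)).comap
        ((AddMonoidHom.id ℤ).coprod (AddMonoidHom.id ℤ)) := by
      apply (AddSubgroup.closure_le _).2
      rintro w ⟨a, ha, rfl⟩
      simp only [Set.mem_preimage, SetLike.mem_coe, AddSubgroup.mem_comap,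
        AddMonoidHom.coprod_apply, AddMonoidHom.id_apply, AddSubgroup.mem_zmultiples_iff]
      exact ⟨1, by simp⟩
    have h := hle hv
    simp only [AddSubgroup.mem_comap, AddMonoidHom.coprod_apply, AddMonoidHom.id_apply,
      AddSubgroup.mem_zmultiples_iff] at h
    obtain ⟨k, hk⟩ := h
    exact ⟨k, by rw [← hk]; simp [zsmul_eq_mul]; ring⟩
  ext u
  simp only [Set.mem_inter_iff, Set.mem_setOf_eq]
  constructor
  · rintro ⟨⟨n, hn⟩, ⟨m, hm⟩⟩
    have hnn := hSle _ hn
    have hmm := hSle _ hm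
    have hG1 : u ∈ G := by
      have ha : u + n • (((α:ℤ),(0:ℤ)) : ℤ×ℤ) ∈ G := hSG _ hn
      have hb : n • (((α:ℤ),(0:ℤ)) : ℤ×ℤ) ∈ G := AddSubgroup.nsmul_mem G (hSG _ hvα) n
      have := G.sub_mem ha hb
      simpa using this
    refine ⟨hG1, ?_, ?_⟩
    · have := hmm.1
      simpa using this
    · have := hnn.2
      simpa using this
  · rintro ⟨hu, hx, hy⟩
    obtain ⟨k, hk⟩ := hdiv u hu
    have hαpos : (0:ℤ) < α := by exact_mod_cast (by omega : 0 < α)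
    have hk0 : 0 ≤ k := by nlinarith
    have h2 : (u.2.toNat : ℤ) = u.2 := Int.toNat_of_nonneg hy
    have h1' : (u.1.toNat : ℤ) = u.1 := Int.toNat_of_nonneg hx
    have hk' : (k.toNat : ℤ) = k := Int.toNat_of_nonneg hk0
    constructor
    · refine ⟨u.2.toNat, ?_⟩
      have heq : u + u.2.toNat • (((α:ℤ),(0:ℤ)) : ℤ×ℤ)
          = u.2.toNat • (((α:ℤ)-1,(1:ℤ)) : ℤ×ℤ) + k.toNat • (((α:ℤ),(0:ℤ)) : ℤ×ℤ) := by
        rw [Prod.ext_iff]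
        constructor
        · simp only [Prod.fst_add, Prod.smul_fst]
          simp only [nsmul_eq_mul, h2, hk']
          linear_combination hk
        · simp only [Prod.snd_add, Prod.smul_snd]
          simp only [nsmul_eq_mul, h2, hk']
          ring
      rw [heq]
      exact S.add_mem (AddSubmonoid.nsmul_mem S hvα1 _) (AddSubmonoid.nsmul_mem S hvα _)
    · refine ⟨u.1.toNat, ?_⟩
      have heq : u + u.1.toNat • (((0:ℤ),(α:ℤ)) : ℤ×ℤ)
          = u.1.toNat • (((1:ℤ),(α:ℤ)-1) : ℤ×ℤ) + k.toNat • (((0:ℤ),(α:ℤ)) : ℤ×ℤ) := by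
        rw [Prod.ext_iff]
        constructor
        · simp only [Prod.fst_add, Prod.smul_fst]
          simp only [nsmul_eq_mul, h1', hk']
          ring
        · simp only [Prod.snd_add, Prod.smul_snd]
          simp only [nsmul_eq_mul, h1', hk']
          linear_combination hk
      rw [heq]
      exact S.add_mem (AddSubmonoid.nsmul_mem S hv1 _) (AddSubmonoid.nsmul_mem S hv0 _)
end

section
/- Assume 𝒜 is smooth. Let S be the additive submonoid of ℕ² generated by the vectors (a, α−a) for a ∈ 𝒜, let G be the subgroup of ℤ² generated by these vectors, and set S̄ := G ∩ ℕ². For u = (u₁,u₂) ∈ S̄, every u₁ + u₂ is divisible by α, and define deg u := (u₁ + u₂)/α. Then max{deg u : u ∈ (S̄ ∖ S) ∪ {(0,0)}} + 1 = min{m ≥ 1 : m𝒜 is full}. -/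
open scoped Pointwise

/-!
An element of `G ∩ ℕ²` of degree `d` is `(x, dα - x)` with `0 ≤ x ≤ dα`, and it lies in `S`
exactly when `x ∈ d𝒜`. Hence `S̄ ∖ S` has an element of degree `d` iff `d𝒜` is not full. Since
`0, α ∈ 𝒜`, fullness of `m𝒜` for `m ≥ 1` passes to `(m+1)𝒜`, so the degrees of `S̄ ∖ S`
together with `0` are exactly the `d < reg(𝒜)`. Smoothness is what makes `(α-1)𝒜` full (so that
`reg(𝒜)` is finite), and `0, 1 ∈ 𝒜` give `G = {u | α ∣ u₁ + u₂}`.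
-/

section Sumset

variable {A : Finset ℕ} {α : ℕ}

lemma add_mem_sumset {x y m n : ℕ} (hx : x ∈ sumset A m) (hy : y ∈ sumset A n) :
    x + y ∈ sumset A (m + n) := by
  induction n generalizing y with
  | zero => simp_all [sumset]
  | succ n ih =>
    obtain ⟨b, hb, a, ha, rfl⟩ := Finset.mem_add.1 hy
    show x + (b + a) ∈ sumset A (m + n + 1)
    exact Finset.mem_add.2 ⟨x + b, ih hb, a, ha, add_assoc x b a⟩

lemma mul_mem_sumset {a : ℕ} (ha : a ∈ A) (n : ℕ) : n * a ∈ sumset A n := by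
  induction n with
  | zero => simp [sumset]
  | succ n ih => exact Finset.mem_add.2 ⟨n * a, ih, a, ha, by ring⟩

lemma mem_sumset_of_le (h0 : 0 ∈ A) {x m n : ℕ} (hx : x ∈ sumset A m) (h : m ≤ n) :
    x ∈ sumset A n := by
  simpa [Nat.add_sub_cancel' h] using add_mem_sumset hx (mul_mem_sumset h0 (n - m))

lemma le_mul_of_mem_sumset (hb : ∀ a ∈ A, a ≤ α) {x m : ℕ} (hx : x ∈ sumset A m) :
    x ≤ m * α := by
  induction m generalizing x with
  | zero => simp_all [sumset]
  | succ m ih =>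
    obtain ⟨b, hb', a, ha, rfl⟩ := Finset.mem_add.1 hx
    rw [add_one_mul]
    exact add_le_add (ih hb') (hb a ha)

lemma isFull_sumset_iff (hαA : α ∈ A) (hb : ∀ a ∈ A, a ≤ α) {m : ℕ} :
    IsFull (sumset A m) ↔ Finset.Iic (m * α) ⊆ sumset A m := by
  constructor
  · rintro ⟨n, hn⟩ k hk
    rw [hn, Finset.mem_Iic]
    exact (Finset.mem_Iic.1 hk).trans (Finset.mem_Iic.1 (hn ▸ mul_mem_sumset hαA m))
  · intro h
    exact ⟨m * α, Finset.Subset.antisymm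
      (fun x hx => Finset.mem_Iic.2 (le_mul_of_mem_sumset hb hx)) h⟩

lemma Iic_subset_sumset_succ (h0 : 0 ∈ A) (hαA : α ∈ A) {m : ℕ} (hm : 1 ≤ m)
    (h : Finset.Iic (m * α) ⊆ sumset A m) :
    Finset.Iic ((m + 1) * α) ⊆ sumset A (m + 1) := by
  intro k hk
  rw [Finset.mem_Iic] at hk
  by_cases hkm : k ≤ m * α
  · exact mem_sumset_of_le h0 (h (Finset.mem_Iic.2 hkm)) m.le_succ
  · have hαk : α ≤ k := by nlinarith
    refine Finset.mem_add.2 ⟨k - α, h (Finset.mem_Iic.2 ?_), α, hαA, Nat.sub_add_cancel hαk⟩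
    rw [add_one_mul] at hk
    omega

lemma Iic_subset_sumset_of_le (h0 : 0 ∈ A) (hαA : α ∈ A) {m n : ℕ} (hm : 1 ≤ m)
    (h : Finset.Iic (m * α) ⊆ sumset A m) (hmn : m ≤ n) :
    Finset.Iic (n * α) ⊆ sumset A n := by
  induction n, hmn using Nat.le_induction with
  | base => exact h
  | succ n hn ih => exact Iic_subset_sumset_succ h0 hαA (hm.trans hn) ih

lemma mul_add_mul_mem_sumset {a b : ℕ} (ha : a ∈ A) (hb : b ∈ A) (i j : ℕ) :
    i * a + j * b ∈ sumset A (i + j) :=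
  add_mem_sumset (mul_mem_sumset ha i) (mul_mem_sumset hb j)

lemma Iic_subset_sumset_of_smooth (h0 : 0 ∈ A) (h1 : 1 ∈ A) (hαm1 : α - 1 ∈ A) (hαA : α ∈ A)
    (hα : 0 < α) {m : ℕ} (hm : α - 1 ≤ m) :
    Finset.Iic (m * α) ⊆ sumset A m := by
  intro k hk
  rw [Finset.mem_Iic] at hk
  obtain ⟨q, r, hrα, rfl⟩ : ∃ q r, r < α ∧ k = q * α + r :=
    ⟨k / α, k % α, Nat.mod_lt k hα, by rw [mul_comm, Nat.div_add_mod]⟩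
  by_cases hqr : q + r ≤ m
  · refine mem_sumset_of_le h0 ?_ hqr
    simpa [add_comm] using mul_add_mul_mem_sumset h1 hαA r q
  · -- `q α + r = (α - r) (α - 1) + (q + 1 + r - α) α`, a sum of only `q + 1` elements.
    have hq : q + 1 ≤ m := by nlinarith
    have hmem := mul_add_mul_mem_sumset hαm1 hαA (α - r) (q + 1 + r - α)
    rw [show α - r + (q + 1 + r - α) = q + 1 by omega] at hmem
    convert mem_sumset_of_le h0 hmem hq using 1
    zify [hrα.le, show 1 ≤ α by omega, show α ≤ q + 1 + r by omega]
    ring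

lemma lt_regA_iff (h0 : 0 ∈ A) (h1 : 1 ∈ A) (hαm1 : α - 1 ∈ A) (hαA : α ∈ A)
    (hb : ∀ a ∈ A, a ≤ α) {d : ℕ} :
    d < regA A ↔ d = 0 ∨ ¬ Finset.Iic (d * α) ⊆ sumset A d := by
  have hreg : 1 ≤ regA A ∧ IsFull (sumset A (regA A)) :=
    Nat.sInf_mem (s := {m | 1 ≤ m ∧ IsFull (sumset A m)}) ⟨α, hb 1 h1,
      (isFull_sumset_iff hαA hb).2
        (Iic_subset_sumset_of_smooth h0 h1 hαm1 hαA (hb 1 h1) (Nat.sub_le α 1))⟩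
  rw [isFull_sumset_iff hαA hb] at hreg
  constructor
  · intro hd
    rcases Nat.eq_zero_or_pos d with hd0 | hd0
    · exact Or.inl hd0
    · refine Or.inr fun hfull => hd.not_ge (Nat.sInf_le ⟨hd0, ?_⟩)
      exact (isFull_sumset_iff hαA hb).2 hfull
  · rintro (rfl | hd)
    · exact hreg.1
    · by_contra! hle
      exact hd (Iic_subset_sumset_of_le h0 hαA hreg.1 hreg.2 hle)

end Sumset

def degreeVectors (A : Finset ℕ) (α : ℕ) : Set (ℤ × ℤ) :=
  {v | ∃ a ∈ A, v = ((a : ℤ), (α : ℤ) - (a : ℤ))}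

section DegreeVectors

variable {A : Finset ℕ} {α : ℕ}

lemma mem_closure_degreeVectors_iff {u : ℤ × ℤ} :
    u ∈ AddSubmonoid.closure (degreeVectors A α) ↔
      ∃ m x : ℕ, x ∈ sumset A m ∧ u = ((x : ℤ), (m : ℤ) * α - x) := by
  constructor
  · intro hu
    induction hu using AddSubmonoid.closure_induction with
    | mem v hv =>
      obtain ⟨a, ha, rfl⟩ := hv
      exact ⟨1, a, Finset.mem_add.2 ⟨0, Finset.mem_singleton_self 0, a, ha, zero_add a⟩, by simp⟩
    | zero => exact ⟨0, 0, Finset.mem_singleton_self 0, by ext <;> simp⟩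
    | add x y _ _ ihx ihy =>
      obtain ⟨m, x', hx', rfl⟩ := ihx
      obtain ⟨n, y', hy', rfl⟩ := ihy
      refine ⟨m + n, x' + y', add_mem_sumset hx' hy', ?_⟩
      simp only [Prod.mk_add_mk, Nat.cast_add]
      ring_nf
  · rintro ⟨m, x, hx, rfl⟩
    induction m generalizing x with
    | zero =>
      obtain rfl := Finset.mem_singleton.1 hx
      convert AddSubmonoid.zero_mem _ using 1
      ext <;> simp
    | succ m ih =>
      obtain ⟨b, hb, a, ha, rfl⟩ := Finset.mem_add.1 hx
      convert add_mem (ih b hb) (AddSubmonoid.subset_closure ⟨a, ha, rfl⟩) using 1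
      simp only [Prod.mk_add_mk, Nat.cast_add, Nat.cast_one]
      ring_nf

lemma mk_mem_closure_degreeVectors_iff (hα : 0 < α) {d x : ℕ} :
    ((x : ℤ), (d : ℤ) * α - x) ∈ AddSubmonoid.closure (degreeVectors A α) ↔ x ∈ sumset A d := by
  rw [mem_closure_degreeVectors_iff]
  constructor
  · rintro ⟨m, y, hy, he⟩
    obtain ⟨hxy, hdm⟩ := Prod.mk.injEq _ _ _ _ ▸ he
    obtain rfl : x = y := by exact_mod_cast hxy
    obtain rfl : d = m := by
      have : (d : ℤ) * α = m * α := by simp_all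
      exact_mod_cast mul_right_cancel₀ (by positivity) this
    exact hy
  · exact fun hx => ⟨d, x, hx, rfl⟩

lemma mem_addSubgroupClosure_degreeVectors_iff (h0 : 0 ∈ A) (h1 : 1 ∈ A) {u : ℤ × ℤ} :
    u ∈ AddSubgroup.closure (degreeVectors A α) ↔ (α : ℤ) ∣ u.1 + u.2 := by
  constructor
  · intro hu
    induction hu using AddSubgroup.closure_induction with
    | mem v hv => obtain ⟨a, ha, rfl⟩ := hv; simp
    | zero => simp
    | add x y _ _ ihx ihy => simpa [add_add_add_comm] using dvd_add ihx ihy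
    | neg x _ ihx => rwa [Prod.fst_neg, Prod.snd_neg, ← neg_add, dvd_neg]
  · rintro ⟨k, hk⟩
    have hv0 : ((0 : ℤ), (α : ℤ)) ∈ AddSubgroup.closure (degreeVectors A α) :=
      AddSubgroup.subset_closure ⟨0, h0, by simp⟩
    have hv1 : ((1 : ℤ), (α : ℤ) - 1) ∈ AddSubgroup.closure (degreeVectors A α) :=
      AddSubgroup.subset_closure ⟨1, h1, by simp⟩
    convert add_mem (zsmul_mem (sub_mem hv1 hv0) u.1) (zsmul_mem hv0 k) using 1
    ext
    · simp
    · simp; linarith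

lemma exists_nonneg_notMem_closure_degreeVectors_iff (h0 : 0 ∈ A) (h1 : 1 ∈ A) (hα : 0 < α)
    (d : ℕ) :
    (∃ u : ℤ × ℤ, u ∈ AddSubgroup.closure (degreeVectors A α) ∧ 0 ≤ u.1 ∧ 0 ≤ u.2 ∧
        u ∉ AddSubmonoid.closure (degreeVectors A α) ∧ (d : ℤ) * α = u.1 + u.2) ↔
      ¬ Finset.Iic (d * α) ⊆ sumset A d := by
  constructor
  · rintro ⟨⟨u₁, u₂⟩, -, hu₁, hu₂, huS, hdeg⟩ hfull
    lift u₁ to ℕ using hu₁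
    obtain rfl : u₂ = d * α - u₁ := by linarith
    refine huS ((mk_mem_closure_degreeVectors_iff hα).2 (hfull (Finset.mem_Iic.2 ?_)))
    exact_mod_cast (show (u₁ : ℤ) ≤ d * α by linarith)
  · intro hgap
    obtain ⟨x, hx, hxS⟩ := Finset.not_subset.1 hgap
    have hx' : (x : ℤ) ≤ d * α := by exact_mod_cast Finset.mem_Iic.1 hx
    refine ⟨((x : ℤ), (d : ℤ) * α - x), ?_, by positivity, by linarith, ?_, by ring⟩
    · exact (mem_addSubgroupClosure_degreeVectors_iff h0 h1).2 ⟨d, by ring⟩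
    · exact fun hS => hxS ((mk_mem_closure_degreeVectors_iff hα).1 hS)

end DegreeVectors

/-- For smooth `𝒜`, with `S̄ := G ∩ ℕ²`: every `u ∈ S̄` has `α ∣ u₁ + u₂`, and
`max {deg u | u ∈ (S̄ ∖ S) ∪ {0}} + 1 = min {m ≥ 1 | m𝒜 is full}`,
where `deg u = (u₁ + u₂)/α`. -/
theorem stmt_3 (𝒜 : Finset ℕ) (hne : 𝒜.Nonempty) (h0 : 0 ∈ 𝒜)
    (α : ℕ) (hα : α = 𝒜.max' hne) (hα2 : 2 ≤ α)
    (h1 : 1 ∈ 𝒜) (hαm1 : α - 1 ∈ 𝒜)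
    (S : AddSubmonoid (ℤ × ℤ))
    (hS : S = AddSubmonoid.closure {v : ℤ × ℤ | ∃ a ∈ 𝒜, v = ((a : ℤ), (α : ℤ) - (a : ℤ))})
    (G : AddSubgroup (ℤ × ℤ))
    (hG : G = AddSubgroup.closure {v : ℤ × ℤ | ∃ a ∈ 𝒜, v = ((a : ℤ), (α : ℤ) - (a : ℤ))}) :
    (∀ u : ℤ × ℤ, u ∈ G → 0 ≤ u.1 → 0 ≤ u.2 → (α : ℤ) ∣ (u.1 + u.2)) ∧
    sSup {d : ℕ | d = 0 ∨ ∃ u : ℤ × ℤ,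
        u ∈ G ∧ 0 ≤ u.1 ∧ 0 ≤ u.2 ∧ u ∉ S ∧ (d : ℤ) * (α : ℤ) = u.1 + u.2} + 1 =
      sInf {m : ℕ | 1 ≤ m ∧ IsFull (sumset 𝒜 m)} := by
  obtain rfl : S = AddSubmonoid.closure (degreeVectors 𝒜 α) := hS
  obtain rfl : G = AddSubgroup.closure (degreeVectors 𝒜 α) := hG
  have hαA : α ∈ 𝒜 := hα ▸ 𝒜.max'_mem hne
  have hb : ∀ a ∈ 𝒜, a ≤ α := fun a ha => hα ▸ 𝒜.le_max' a ha
  refine ⟨fun u hu _ _ => (mem_addSubgroupClosure_degreeVectors_iff h0 h1).1 hu, ?_⟩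
  simp_rw [exists_nonneg_notMem_closure_degreeVectors_iff h0 h1 (by omega : 0 < α),
    ← lt_regA_iff h0 h1 hαm1 hαA hb]
  change sSup (Set.Iio (regA 𝒜)) + 1 = regA 𝒜
  obtain ⟨n, hn⟩ : ∃ n, regA 𝒜 = n + 1 :=
    Nat.exists_eq_add_one.2 ((lt_regA_iff h0 h1 hαm1 hαA hb).2 (Or.inl rfl))
  rw [hn, Set.Iio_add_one_eq_Iic, csSup_Iic]
end

section
/- Let B be a nonempty finite subset of ℕ and let p ∈ ℕ. Then λ({0,1,…,p} + B) = max{0, λ(B) − p}. -/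
open scoped Pointwise

lemma gapSet_bdd (D : Finset ℕ) :
    BddAbove {n | ∃ i j, IsGap D i j ∧ n = j - i + 1} := by
  refine ⟨D.sup id, ?_⟩
  rintro n ⟨i, j, ⟨h1, h2, h3, h4, h5⟩, rfl⟩
  have : j + 1 ≤ D.sup id := Finset.le_sup (f := id) h5
  omega

lemma gapLen_pos_mem (D : Finset ℕ) (h : 0 < gapLen D) :
    ∃ i j, IsGap D i j ∧ gapLen D = j - i + 1 := by
  have hne : {n | ∃ i j, IsGap D i j ∧ n = j - i + 1}.Nonempty := by
    by_contra hc
    rw [Set.not_nonempty_iff_eq_empty] at hc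
    rw [gapLen, hc, csSup_empty] at h
    simp at h
  exact Nat.sSup_mem hne (gapSet_bdd D)

/-- `λ({0,…,p} + B) = max {0, λ(B) − p}` (here `λ(B) - p` is truncated subtraction in `ℕ`). -/
theorem stmt_9 (B : Finset ℕ) (hB : B.Nonempty) (p : ℕ) :
    gapLen (Finset.Iic p + B) = gapLen B - p := by
  set C := Finset.Iic p + B with hC
  have hCmem : ∀ x, x ∈ C ↔ ∃ b ∈ B, b ≤ x ∧ x ≤ b + p := by
    intro x
    simp only [hC, Finset.mem_add, Finset.mem_Iic]
    constructor
    · rintro ⟨t, ht, b, hb, rfl⟩; exact ⟨b, hb, by omega, by omega⟩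
    · rintro ⟨b, hb, h1, h2⟩; exact ⟨x - b, by omega, b, hb, by omega⟩
  -- every gap length of C is ≤ gapLen B - p
  have hub : ∀ n ∈ {n | ∃ i j, IsGap C i j ∧ n = j - i + 1}, n ≤ gapLen B - p := by
    rintro n ⟨i, j, ⟨hi1, hij, hgap, hiC, hjC⟩, rfl⟩
    obtain ⟨b, hbB, hb1, hb2⟩ := (hCmem _).1 hjC
    obtain ⟨b', hb'B, hb'1, hb'2⟩ := (hCmem _).1 hiC
    have hBC : ∀ x ∈ B, x ∈ C := fun x hx => (hCmem x).2 ⟨x, hx, le_refl _, by omega⟩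
    -- b' + p < i
    have hb'lt : b' + p < i := by
      by_contra hcon
      exact hgap i (le_refl _) hij ((hCmem i).2 ⟨b', hb'B, by omega, by omega⟩)
    have hip : p < i := by omega
    -- b = j + 1
    have hbj : b = j + 1 := by
      rcases Nat.lt_or_ge b i with hlt | hge
      · exact absurd ((hCmem i).2 ⟨b, hbB, by omega, by omega⟩) (hgap i (le_refl _) hij)
      · rcases Nat.lt_or_ge j b with h | h
        · omega
        · exact absurd (hBC b hbB) (hgap b hge h)
    have hjB : j + 1 ∈ B := hbj ▸ hbB
    -- no element of B in [i-p, j]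
    have hnoB : ∀ k ∈ B, i - p ≤ k → k ≤ j → False := by
      intro k hk h1 h2
      rcases Nat.lt_or_ge k i with hlt | hge
      · exact hgap i (le_refl _) hij ((hCmem i).2 ⟨k, hk, by omega, by omega⟩)
      · exact hgap k hge h2 (hBC k hk)
    -- maximal element of B below i - p
    have hS : (B.filter (fun x => x ≤ i - p - 1)).Nonempty :=
      ⟨b', Finset.mem_filter.2 ⟨hb'B, by omega⟩⟩
    set m := (B.filter (fun x => x ≤ i - p - 1)).max' hS with hm
    have hmB : m ∈ B ∧ m ≤ i - p - 1 := by
      have := Finset.max'_mem _ hS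
      rw [Finset.mem_filter] at this
      exact ⟨this.1, this.2⟩
    have hmmax : ∀ k ∈ B, k ≤ i - p - 1 → k ≤ m := by
      intro k hk h
      rw [hm]
      exact Finset.le_max' (B.filter (fun x => x ≤ i - p - 1)) k
        (Finset.mem_filter.2 ⟨hk, h⟩)
    have hgapB : IsGap B (m + 1) j := by
      refine ⟨by omega, by omega, ?_, by simpa using hmB.1, hjB⟩
      intro k h1 h2 hk
      rcases Nat.lt_or_ge k (i - p) with hlt | hge
      · have := hmmax k hk (by omega); omega
      · exact hnoB k hk hge h2
    have hle : j - (m + 1) + 1 ≤ gapLen B :=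
      le_csSup (gapSet_bdd B) ⟨m + 1, j, hgapB, rfl⟩
    omega
  have h1 : gapLen C ≤ gapLen B - p := by
    by_cases hne : {n | ∃ i j, IsGap C i j ∧ n = j - i + 1}.Nonempty
    · exact csSup_le hne hub
    · rw [Set.not_nonempty_iff_eq_empty] at hne
      rw [gapLen, hne, csSup_empty]
      exact Nat.zero_le _
  have h2 : gapLen B - p ≤ gapLen C := by
    rcases le_or_gt (gapLen B) p with h | h
    · omega
    · obtain ⟨i, j, ⟨hi1, hij, hgap, hiB, hjB⟩, heq⟩ := gapLen_pos_mem B (by omega)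
      have hgapC : IsGap C (i + p) j := by
        refine ⟨by omega, by omega, ?_, ?_, ?_⟩
        · intro k h1' h2' hk
          obtain ⟨b, hbB, hb1, hb2⟩ := (hCmem k).1 hk
          exact hgap b (by omega) (by omega) hbB
        · exact (hCmem _).2 ⟨i - 1, hiB, by omega, by omega⟩
        · exact (hCmem _).2 ⟨j + 1, hjB, le_refl _, by omega⟩
      have := le_csSup (gapSet_bdd C) (a := j - (i + p) + 1) ⟨i + p, j, hgapC, rfl⟩
      have : j - (i + p) + 1 ≤ gapLen C := this
      omega
  omega
end

section
/- Let A, B be nonempty finite subsets of ℕ. Then λ(A + B) ≤ max{λ(A), λ(B)}. -/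
open scoped Pointwise

lemma gapLen_bdd (A : Finset ℕ) (hA : A.Nonempty) :
    BddAbove {n | ∃ i j, IsGap A i j ∧ n = j - i + 1} := by
  refine ⟨A.max' hA, ?_⟩
  rintro n ⟨i, j, ⟨h1, h2, h3, h4, h5⟩, rfl⟩
  have := Finset.le_max' A (j + 1) h5
  omega

lemma aux_gap (A B : Finset ℕ) (hA : A.Nonempty) (i j a b a' : ℕ)
    (ha : a ∈ A) (hb : b ∈ B) (ha' : a' ∈ A) (haa' : a < a')
    (hab : a + b + 1 = i) (hij : i ≤ j)
    (hgap : ∀ k, i ≤ k → k ≤ j → k ∉ A + B) :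
    j - i + 1 ≤ gapLen A := by
  set S := A.filter (fun x => a < x) with hS
  have hSne : S.Nonempty := ⟨a', Finset.mem_filter.mpr ⟨ha', haa'⟩⟩
  set c := S.min' hSne with hc
  have hcS : c ∈ S := S.min'_mem hSne
  have hcA : c ∈ A := (Finset.mem_filter.mp hcS).1
  have hac : a < c := (Finset.mem_filter.mp hcS).2
  have hmin : ∀ x ∈ A, a < x → c ≤ x := fun x hx hax =>
    S.min'_le x (Finset.mem_filter.mpr ⟨hx, hax⟩)
  -- c must be large, else c + b lies in the gap
  have hbig : a + (j - i) + 2 ≤ c := by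
    by_contra h
    have hcb : c + b ∈ A + B := Finset.add_mem_add hcA hb
    exact hgap (c + b) (by omega) (by omega) hcb
  -- the interval (a, c) is a gap of A
  have hgA : IsGap A (a + 1) (c - 1) := by
    refine ⟨by omega, by omega, ?_, by simpa using ha, by
      have : c - 1 + 1 = c := by omega
      rw [this]; exact hcA⟩
    intro k hk1 hk2 hkA
    have := hmin k hkA (by omega)
    omega
  have hmem : (c - 1) - (a + 1) + 1 ∈ {n | ∃ i j, IsGap A i j ∧ n = j - i + 1} :=
    ⟨a + 1, c - 1, hgA, rfl⟩
  have hle := le_csSup (gapLen_bdd A hA) hmem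
  unfold gapLen
  omega

/-- `λ(A + B) ≤ max {λ(A), λ(B)}`. -/
theorem stmt_11 (A B : Finset ℕ) (hA : A.Nonempty) (hB : B.Nonempty) :
    gapLen (A + B) ≤ max (gapLen A) (gapLen B) := by
  apply csSup_le'
  rintro n ⟨i, j, ⟨h1, h2, h3, h4, h5⟩, rfl⟩
  obtain ⟨a, ha, b, hb, hab⟩ := Finset.mem_add.mp h4
  obtain ⟨a', ha', b', hb', hab'⟩ := Finset.mem_add.mp h5
  have hlt : a + b < a' + b' := by omega
  rcases lt_or_ge a a' with h | h
  · exact le_max_of_le_left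
      (aux_gap A B hA i j a b a' ha hb ha' h (by omega) h2 h3)
  · have hbb' : b < b' := by omega
    have hcomm : A + B = B + A := add_comm A B
    rw [hcomm] at h3
    exact le_max_of_le_right
      (aux_gap B A hB i j b a b' hb ha hb' hbb' (by omega) h2 h3)
end

section
/- Let A be a nonempty finite subset of ℕ and let i ≥ 1 be an integer. Then λ(iA) ≤ λ(A), where iA denotes the i-fold sumset of A with itself. -/
open scoped Pointwise

lemma bddAbove_gaps (B : Finset ℕ) : BddAbove {n | ∃ i j, IsGap B i j ∧ n = j - i + 1} := by
  refine ⟨B.sup id + 1, fun n hn => ?_⟩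
  obtain ⟨i, j, ⟨h1, h2, h3, h4, h5⟩, rfl⟩ := hn
  have := Finset.le_sup (f := id) h5
  simp only [id] at this
  omega

lemma gap_down (A : Finset ℕ) (hA : A.Nonempty) (a : ℕ) (ha : a ∈ A) (h : A.min' hA < a) :
    ∃ a' ∈ A, a' < a ∧ a ≤ a' + gapLen A + 1 := by
  classical
  have hS : (A.filter (· < a)).Nonempty :=
    ⟨A.min' hA, by simp [A.min'_mem hA, h]⟩
  set a' := (A.filter (· < a)).max' hS with ha'def
  have hmem := (A.filter (· < a)).max'_mem hS
  rw [Finset.mem_filter] at hmem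
  refine ⟨a', hmem.1, hmem.2, ?_⟩
  by_contra hc
  push_neg at hc
  have hgap : IsGap A (a' + 1) (a - 1) := by
    refine ⟨by omega, by omega, ?_, by simpa using hmem.1, ?_⟩
    · intro k hk1 hk2 hkA
      have hk' : k ∈ A.filter (· < a) := by
        rw [Finset.mem_filter]; exact ⟨hkA, by omega⟩
      have := (A.filter (· < a)).le_max' k hk'
      omega
    · have : a - 1 + 1 = a := by omega
      rw [this]; exact ha
  have hle : a - 1 - (a' + 1) + 1 ≤ gapLen A :=
    le_csSup (bddAbove_gaps A) ⟨a' + 1, a - 1, hgap, rfl⟩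
  omega

lemma sumset_min_le (A : Finset ℕ) (hA : A.Nonempty) :
    ∀ i, ∀ n ∈ sumset A i, i * A.min' hA ≤ n := by
  intro i
  induction i with
  | zero => intro n hn; simp [sumset] at hn; omega
  | succ m ih =>
    intro n hn
    rw [sumset, Finset.mem_add] at hn
    obtain ⟨b, hb, a, ha, rfl⟩ := hn
    have h1 := ih b hb
    have h2 := A.min'_le a ha
    have h3 : (m + 1) * A.min' hA = m * A.min' hA + A.min' hA := Nat.succ_mul _ _
    omega

lemma key_lemma (A : Finset ℕ) (hA : A.Nonempty) : ∀ i, ∀ n ∈ sumset A i,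
    i * A.min' hA < n → ∃ n' ∈ sumset A i, n' < n ∧ n ≤ n' + gapLen A + 1 := by
  intro i
  induction i with
  | zero => intro n hn h; simp [sumset] at hn; omega
  | succ m ih =>
    intro n hn h
    rw [sumset, Finset.mem_add] at hn
    obtain ⟨b, hb, a, ha, rfl⟩ := hn
    rcases lt_or_eq_of_le (A.min'_le a ha) with hlt | heq
    · obtain ⟨a', ha', hlt', hle'⟩ := gap_down A hA a ha hlt
      exact ⟨b + a', by rw [sumset, Finset.mem_add]; exact ⟨b, hb, a', ha', rfl⟩,
        by omega, by omega⟩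
    · have hmul : (m + 1) * A.min' hA = m * A.min' hA + A.min' hA := Nat.succ_mul _ _
      have hb' : m * A.min' hA < b := by omega
      obtain ⟨b', hb'', hlt', hle'⟩ := ih b hb hb'
      exact ⟨b' + a, by rw [sumset, Finset.mem_add]; exact ⟨b', hb'', a, ha, rfl⟩,
        by omega, by omega⟩

/-- `λ(iA) ≤ λ(A)` for every `i ≥ 1`. -/
theorem stmt_12 (A : Finset ℕ) (hA : A.Nonempty) (i : ℕ) (hi : 1 ≤ i) :
    gapLen (sumset A i) ≤ gapLen A := by
  apply csSup_le'
  rintro n ⟨x, y, ⟨h1, h2, h3, h4, h5⟩, rfl⟩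
  have hx := sumset_min_le A hA i (x - 1) h4
  obtain ⟨n', hn', hlt, hle⟩ := key_lemma A hA i (y + 1) h5 (by omega)
  have hnx : n' < x := by
    by_contra hc
    push_neg at hc
    exact h3 n' hc (by omega) hn'
  omega
end

section
/- Suppose 𝒜 = {0, 1, …, p} ∪ {q₁, …, q_l} ∪ {α}, where 1 ≤ p < q₁ < ⋯ < q_l ≤ α and p ≥ α − q₁. Then 𝒜 has property (P₂). -/
/-!
Write `q = min Q` and `d = α - q ≤ p`. A sum of `m` elements of `𝒜` that lies within `α - p` of
`mα` uses only summands `≥ q`; since `(m-1)α + p + 1` lies in the top interval, this forces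
`mq ≤ (m-1)α + p + 1`. Any `x < (m-1)α` is `kα + r` with `r < α`. Either `r` is a sum of
`m - k` elements of `{0, …, p}`, or `x = (k-t)α + (t+1)q + s` with `t` least such that
`q ≤ r + td`; then `s < d ≤ p`, and the inequality above gives `t ≤ k`.
-/

open scoped Pointwise

namespace sumset

variable {A : Finset ℕ}

theorem add_mem_add {a b x y : ℕ} (hx : x ∈ sumset A a) (hy : y ∈ sumset A b) :
    x + y ∈ sumset A (a + b) := by
  induction b generalizing y with
  | zero =>
    rw [sumset, Finset.mem_singleton] at hy
    simpa [hy] using hx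
  | succ b ih =>
    obtain ⟨y, hy', c, hc, rfl⟩ := Finset.mem_add.mp hy
    show x + (y + c) ∈ sumset A (a + b) + A
    exact add_assoc x y c ▸ Finset.add_mem_add (ih hy') hc

theorem mul_mem {a : ℕ} (ha : a ∈ A) (k : ℕ) : k * a ∈ sumset A k := by
  induction k with
  | zero => simp [sumset]
  | succ k ih => exact (Nat.succ_mul k a).symm ▸ Finset.add_mem_add ih ha

theorem mem_of_le_mul {p t s : ℕ} (hp : Finset.Iic p ⊆ A) (hs : s ≤ t * p) :
    s ∈ sumset A t := by
  induction t generalizing s with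
  | zero => simp_all [sumset]
  | succ t ih =>
    obtain ⟨s₁, s₂, rfl, hs₁, hs₂⟩ : ∃ s₁ s₂, s = s₁ + s₂ ∧ s₁ ≤ t * p ∧ s₂ ≤ p :=
      ⟨s - min s p, min s p, by omega, by rw [Nat.succ_mul] at hs; omega, min_le_right _ _⟩
    exact Finset.add_mem_add (ih hs₁) (hp (Finset.mem_Iic.mpr hs₂))

theorem mul_add_mul_add_mem {p u v a b c s : ℕ} (hp : Finset.Iic p ⊆ A) (hu : u ∈ A)
    (hv : v ∈ A) (hc : c ≤ s * p) : a * u + b * v + c ∈ sumset A (a + b + s) :=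
  add_mem_add (add_mem_add (mul_mem hu a) (mul_mem hv b)) (mem_of_le_mul hp hc)

theorem le_mul_of_mem {α m x : ℕ} (hA : ∀ a ∈ A, a ≤ α) (hx : x ∈ sumset A m) :
    x ≤ m * α := by
  induction m generalizing x with
  | zero => simp_all [sumset]
  | succ m ih =>
    obtain ⟨y, hy, a, ha, rfl⟩ := Finset.mem_add.mp hx
    rw [Nat.succ_mul]
    exact add_le_add (ih hy) (hA a ha)

theorem mul_le_of_mem_of_gap {p q α m x : ℕ} (hA : ∀ a ∈ A, a ≤ α)
    (hgap : ∀ a ∈ A, a ≤ p ∨ q ≤ a) (hx : x ∈ sumset A m) (hlarge : m * α + p < x + α) :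
    m * q ≤ x := by
  induction m generalizing x with
  | zero => simp_all [sumset]
  | succ m ih =>
    obtain ⟨y, hy, a, ha, rfl⟩ := Finset.mem_add.mp hx
    have hyα := le_mul_of_mem hA hy
    have haα := hA a ha
    rw [Nat.succ_mul] at hlarge ⊢
    have hqa : q ≤ a := (hgap a ha).resolve_left (by omega)
    have hqy : m * q ≤ y := ih hy (by omega)
    omega

theorem mem_of_lt_mul {p q α n x : ℕ} (hp : Finset.Iic p ⊆ A) (hq : q ∈ A) (hα : α ∈ A)
    (hqα : q ≤ α) (hαq : α ≤ q + p) (hkey : (n + 1) * q ≤ n * α + p + 1) (hx : x < n * α) :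
    x ∈ sumset A (n + 1) := by
  obtain ⟨d, rfl⟩ : ∃ d, α = q + d := ⟨α - q, by omega⟩
  have hα0 : 0 < q + d := Nat.pos_of_ne_zero (by rintro h; simp [h] at hx)
  obtain ⟨k, r, rfl, hr⟩ : ∃ k r, x = k * (q + d) + r ∧ r < q + d :=
    ⟨x / (q + d), x % (q + d), by rw [mul_comm, Nat.div_add_mod], Nat.mod_lt x hα0⟩
  have hkn : k < n := Nat.lt_of_mul_lt_mul_right ((Nat.le_add_right _ r).trans_lt hx)
  obtain ⟨j, rfl⟩ : ∃ j, n = k + j + 1 := ⟨n - k - 1, by omega⟩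
  by_cases hsmall : r ≤ (j + 2) * p
  · simpa [add_assoc] using mul_add_mul_add_mem (a := k) (b := 0) hp hα hq hsmall
  have hjd : (j + 1) * d ≤ (j + 1) * p := Nat.mul_le_mul_left _ (by omega)
  -- Write `x = i α + (t + 1) q + s`, with `t` least such that `q ≤ r + t d`, so that `s < d`.
  have hqk : q ≤ r + k * d := by nlinarith
  have hex : ∃ t, q ≤ r + t * d := ⟨k, hqk⟩
  have htk : Nat.find hex ≤ k := Nat.find_min' hex hqk
  have hqt : q ≤ r + Nat.find hex * d := Nat.find_spec hex
  set t := Nat.find hex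
  obtain ⟨i, hi⟩ : ∃ i, k = t + i := ⟨k - t, by omega⟩
  obtain ⟨s, hs⟩ : ∃ s, r + t * d = q + s := ⟨r + t * d - q, by omega⟩
  have hsd : s < d := by
    rcases Nat.eq_zero_or_pos t with ht | ht
    · simp only [ht, zero_mul, add_zero] at hs; omega
    · obtain ⟨t', ht'⟩ := Nat.exists_eq_add_of_lt ht
      have hprev : ¬ q ≤ r + t' * d := Nat.find_min hex (by omega)
      rw [ht', zero_add, Nat.succ_mul] at hs
      omega
  have hsp : s ≤ (j + 1) * p := by nlinarith
  have heq : k * (q + d) + r = i * (q + d) + (t + 1) * q + s := by subst hi; nlinarith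
  rw [heq, show k + j + 1 + 1 = i + (t + 1) + (j + 1) by omega]
  exact mul_add_mul_add_mem hp hα hq hsp

end sumset

theorem isFull_sumset_of_forall_top_mem {A : Finset ℕ} {p q α m : ℕ} (hp : Finset.Iic p ⊆ A)
    (hq : q ∈ A) (hα : α ∈ A) (hA : ∀ a ∈ A, a ≤ α) (hgap : ∀ a ∈ A, a ≤ p ∨ q ≤ a)
    (hpq : p < q) (hαq : α ≤ q + p)
    (htop : ∀ k, (m - 1) * α ≤ k → k ≤ m * α → k ∈ sumset A m) : IsFull (sumset A m) := by
  rcases m with _ | n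
  · exact ⟨0, rfl⟩
  have hqα : q ≤ α := hA q hq
  rw [Nat.add_sub_cancel] at htop
  have hkey : (n + 1) * q ≤ n * α + p + 1 :=
    sumset.mul_le_of_mem_of_gap hA hgap (htop _ (by omega) (by rw [Nat.succ_mul]; omega))
      (by rw [Nat.succ_mul]; omega)
  refine ⟨(n + 1) * α, Finset.ext fun x => ⟨fun hx => ?_, fun hx => ?_⟩⟩
  · exact Finset.mem_Iic.mpr (sumset.le_mul_of_mem hA hx)
  · rcases lt_or_ge x (n * α) with hlt | hge
    · exact sumset.mem_of_lt_mul hp hq hα hqα hαq hkey hlt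
    · exact htop x hge (Finset.mem_Iic.mp hx)

theorem stmt_14_general (𝒜 Q : Finset ℕ) (p α : ℕ) (hQne : Q.Nonempty)
    (h𝒜 : 𝒜 = Finset.Iic p ∪ Q ∪ {α})
    (hQ : ∀ q ∈ Q, p < q ∧ q ≤ α)
    (hpq : α - Q.min' hQne ≤ p) :
    P2 𝒜 α := by
  set q := Q.min' hQne
  have hqQ : q ∈ Q := Q.min'_mem hQne
  obtain ⟨hp_lt_q, hqα⟩ := hQ q hqQ
  subst h𝒜
  intro m hnf ⟨_, htop⟩
  refine hnf (isFull_sumset_of_forall_top_mem (p := p) (q := q) (fun a ha => by simp_all)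
    (by simp [hqQ]) (by simp) (fun a ha => ?_) (fun a ha => ?_) hp_lt_q (by omega) htop)
  all_goals
    simp only [Finset.mem_union, Finset.mem_Iic, Finset.mem_singleton] at ha
    rcases ha with (ha | ha) | rfl
  · omega
  · exact (hQ a ha).2
  · rfl
  · exact .inl ha
  · exact .inr (Q.min'_le a ha)
  · exact .inr hqα

/-- If `𝒜 = {0,…,p} ∪ {q₁,…,q_l} ∪ {α}` with `1 ≤ p < q₁ < ⋯ < q_l ≤ α` and `p ≥ α − q₁`,
then `𝒜` has property `(P₂)`. -/
theorem stmt_14 (𝒜 Q : Finset ℕ) (p α : ℕ) (hQne : Q.Nonempty)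
    (h𝒜 : 𝒜 = Finset.Iic p ∪ Q ∪ {α})
    (hp : 1 ≤ p)
    (hQ : ∀ q ∈ Q, p < q ∧ q ≤ α)
    (hpq : α - Q.min' hQne ≤ p) :
    P2 𝒜 α :=
  stmt_14_general 𝒜 Q p α hQne h𝒜 hQ hpq
end

section
/- Assume 𝒜 is smooth and let ε := max{i ∈ ℕ : {0, 1, …, i} ⊆ 𝒜 and {α − i, …, α} ⊆ 𝒜} (so ε ≥ 1). Then reg(𝒜) ≤ ⌊(λ(𝒜) − 1)/ε⌋ + 2, where reg(𝒜) := min{m ≥ 1 : m𝒜 is full} and the floor ⌊·⌋ is taken in ℤ (so that the bound equals 1 when λ(𝒜) = 0). -/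
open scoped Pointwise

/-!
Write `λ = gapLen 𝒜` and take `p = ⌈λ/ε⌉`, so that `λ ≤ pε`; the bound says `(p+1)𝒜` is full.
Given `n ≤ (p+1)α`, write `n = qα + t` with `q ≤ p` and `0 ≤ t ≤ α`, and set `r = p - q`.
Since no gap of `𝒜` is longer than `λ ≤ (q+r)ε`, some `a ∈ 𝒜` satisfies `t - rε ≤ a ≤ t + qε`.
Then `n - a` lies in `[q(α-ε), qα + rε] = q[α-ε, α] + r[0, ε] ⊆ p𝒜`, so `n ∈ (p+1)𝒜`.
-/

open Finset

lemma sumset_add (A : Finset ℕ) (p q : ℕ) : sumset A (p + q) = sumset A p + sumset A q := by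
  induction q with
  | zero => exact (add_zero (sumset A p)).symm
  | succ q ih => rw [← add_assoc p q 1, sumset, ih, sumset, add_assoc]

lemma sumset_subset_Iic {A : Finset ℕ} {α : ℕ} (hA : A ⊆ Iic α) (m : ℕ) :
    sumset A m ⊆ Iic (m * α) := by
  induction m with
  | zero => simp [sumset]
  | succ m ih => exact (add_subset_add ih hA).trans (Nat.succ_mul m α ▸ Iic_add_Iic_subset _ _)

lemma Nat.Icc_add_Icc {a b c d : ℕ} (hab : a ≤ b) (hcd : c ≤ d) :
    Icc a b + Icc c d = Icc (a + c) (b + d) := by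
  refine (Icc_add_Icc_subset a b c d).antisymm fun k hk => ?_
  rw [mem_Icc] at hk
  exact mem_add.2 ⟨min b (k - c), by simp; omega, k - min b (k - c), by simp; omega, by omega⟩

lemma Icc_mul_subset_sumset {A : Finset ℕ} {a b : ℕ} (hab : a ≤ b) (h : Icc a b ⊆ A) (j : ℕ) :
    Icc (j * a) (j * b) ⊆ sumset A j := by
  induction j with
  | zero => simp [sumset]
  | succ j ih =>
    rw [Nat.succ_mul, Nat.succ_mul, ← Nat.Icc_add_Icc (Nat.mul_le_mul_left j hab) hab]
    exact add_subset_add ih h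

lemma IsGap.le_gapLen {B : Finset ℕ} {i j : ℕ} (h : IsGap B i j) : j - i + 1 ≤ gapLen B := by
  refine le_csSup ⟨B.sup id, ?_⟩ ⟨i, j, h, rfl⟩
  rintro n ⟨i, j, ⟨-, -, -, -, hj⟩, rfl⟩
  have := le_sup (f := id) hj
  simp only [id] at this
  omega

lemma exists_mem_Icc_add_gapLen {B : Finset ℕ} {x y u : ℕ} (hx : x ∈ B) (hy : y ∈ B)
    (hxu : x ≤ u) (huy : u + gapLen B ≤ y) : ∃ a ∈ B, u ≤ a ∧ a ≤ u + gapLen B := by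
  by_contra! hwin
  have hbelow : (B.filter (· < u)).Nonempty := ⟨x, mem_filter.2 ⟨hx, by
    rcases hxu.lt_or_eq with h | rfl
    · exact h
    · exact absurd (hwin x hx le_rfl) (by omega)⟩⟩
  have habove : (B.filter (u + gapLen B < ·)).Nonempty := ⟨y, mem_filter.2 ⟨hy, by
    rcases huy.lt_or_eq with h | h
    · exact h
    · exact absurd (hwin y hy (by omega)) (by omega)⟩⟩
  obtain ⟨L, hL, hLmax⟩ := (B.filter (· < u)).exists_max_image id hbelow
  obtain ⟨R, hR, hRmin⟩ := (B.filter (u + gapLen B < ·)).exists_min_image id habove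
  obtain ⟨hLB, hLu⟩ := mem_filter.1 hL
  obtain ⟨hRB, hRu⟩ := mem_filter.1 hR
  have hgap : IsGap B (L + 1) (R - 1) := by
    refine ⟨by omega, by omega, fun k hk₁ hk₂ hk => ?_, by simpa using hLB,
      by rwa [Nat.sub_add_cancel (by omega)]⟩
    by_cases hku : k < u
    · exact absurd (hLmax k (mem_filter.2 ⟨hk, hku⟩)) (by simp only [id]; omega)
    by_cases hkv : u + gapLen B < k
    · exact absurd (hRmin k (mem_filter.2 ⟨hk, hkv⟩)) (by simp only [id]; omega)
    exact absurd (hwin k hk (by omega)) (by omega)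
  have := hgap.le_gapLen
  omega

lemma exists_mem_of_gapLen_le_add {B : Finset ℕ} {α t c d : ℕ} (h0 : 0 ∈ B) (hα : α ∈ B)
    (ht : t ≤ α) (hgap : gapLen B ≤ c + d) : ∃ a ∈ B, t ≤ a + c ∧ a ≤ t + d := by
  by_cases htc : t ≤ c
  · exact ⟨0, h0, by omega, by omega⟩
  by_cases hαd : α ≤ t + d
  · exact ⟨α, hα, by omega, hαd⟩
  obtain ⟨a, ha, hua, hau⟩ := exists_mem_Icc_add_gapLen (u := t - c) h0 hα (Nat.zero_le _) (by omega)
  exact ⟨a, ha, by omega, by omega⟩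

lemma exists_mul_le_le_mul_add (α : ℕ) {p n : ℕ} (hn : n ≤ (p + 1) * α) :
    ∃ q ≤ p, q * α ≤ n ∧ n ≤ q * α + α := by
  induction p with
  | zero => exact ⟨0, le_rfl, by simp, by simpa using hn⟩
  | succ p ih =>
    by_cases h : n ≤ (p + 1) * α
    · obtain ⟨q, hq, h⟩ := ih h
      exact ⟨q, by omega, h⟩
    · exact ⟨p + 1, le_rfl, by omega, by rwa [← Nat.succ_mul]⟩

section Smooth

variable {A : Finset ℕ} {α ε : ℕ}

lemma Icc_subset_sumset_add (hlow : Iic ε ⊆ A) (hhigh : Icc (α - ε) α ⊆ A)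
    (q r : ℕ) : Icc (q * α - q * ε) (q * α + r * ε) ⊆ sumset A (q + r) := by
  have h := add_subset_add (Icc_mul_subset_sumset (Nat.sub_le α ε) hhigh q)
    (Icc_mul_subset_sumset (Nat.zero_le ε) (Icc_subset_Iic_self.trans hlow) r)
  rwa [mul_zero, Nat.Icc_add_Icc (Nat.mul_le_mul_left q (Nat.sub_le α ε)) (Nat.zero_le _), add_zero,
    Nat.mul_sub, ← sumset_add] at h

lemma sumset_succ_eq_Iic (hA : A ⊆ Iic α) (hlow : Iic ε ⊆ A)
    (hhigh : Icc (α - ε) α ⊆ A) {p : ℕ} (hgap : gapLen A ≤ p * ε) :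
    sumset A (p + 1) = Iic ((p + 1) * α) := by
  refine (sumset_subset_Iic hA _).antisymm fun n hn => ?_
  obtain ⟨q, hqp, hqn, hnq⟩ := exists_mul_le_le_mul_add α (mem_Iic.1 hn)
  have hα : α ∈ A := hhigh (mem_Icc.2 ⟨Nat.sub_le α ε, le_rfl⟩)
  have hsplit : p * ε = (p - q) * ε + q * ε := by rw [← Nat.add_mul, Nat.sub_add_cancel hqp]
  obtain ⟨a, ha, hta, hat⟩ := exists_mem_of_gapLen_le_add (hlow (mem_Iic.2 (Nat.zero_le ε)))
    hα (t := n - q * α) (by omega) (hsplit ▸ hgap)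
  have hqε : q * ε ≤ q * α := Nat.mul_le_mul_left q (mem_Iic.1 (hA (hlow (mem_Iic.2 le_rfl))))
  have hrest : n - a ∈ sumset A (q + (p - q)) :=
    Icc_subset_sumset_add hlow hhigh q (p - q) (mem_Icc.2 ⟨by omega, by omega⟩)
  rw [Nat.add_sub_cancel' hqp] at hrest
  exact mem_add.2 ⟨n - a, hrest, a, ha, by omega⟩

lemma regA_le_succ (hA : A ⊆ Iic α) (hlow : Iic ε ⊆ A)
    (hhigh : Icc (α - ε) α ⊆ A) {p : ℕ} (hgap : gapLen A ≤ p * ε) : regA A ≤ p + 1 :=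
  Nat.sInf_le ⟨p.succ_pos, _, sumset_succ_eq_Iic hA hlow hhigh hgap⟩

end Smooth

lemma exists_natCast_eq_fdiv_add_one {l e : ℕ} (he : 0 < e) :
    ∃ p : ℕ, (p : ℤ) = Int.fdiv ((l : ℤ) - 1) e + 1 ∧ l ≤ p * e := by
  rw [Int.fdiv_eq_ediv_of_nonneg _ (Int.natCast_nonneg e)]
  have he' : (0 : ℤ) < e := by exact_mod_cast he
  obtain ⟨p, hp⟩ := Int.eq_ofNat_of_zero_le (a := ((l : ℤ) - 1) / e + 1)
    (by linarith [Int.le_ediv_of_mul_le he' (show (-1) * (e : ℤ) ≤ l - 1 by linarith)])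
  refine ⟨p, hp.symm, ?_⟩
  have := Int.lt_ediv_add_one_mul_self ((l : ℤ) - 1) he'
  rw [hp] at this
  exact_mod_cast (by linarith : (l : ℤ) ≤ p * e)

theorem stmt_17_general (𝒜 : Finset ℕ) (hne : 𝒜.Nonempty)
    (α : ℕ) (hα : α = 𝒜.max' hne)
    (ε : ℕ)
    (hε : ε = sSup {i : ℕ | (∀ k, k ≤ i → k ∈ 𝒜) ∧ (∀ k, α - i ≤ k → k ≤ α → k ∈ 𝒜)})
    (hε1 : 1 ≤ ε) :
    (regA 𝒜 : ℤ) ≤ Int.fdiv ((gapLen 𝒜 : ℤ) - 1) (ε : ℤ) + 2 := by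
  have hA : 𝒜 ⊆ Iic α := fun a ha => mem_Iic.2 (hα ▸ 𝒜.le_max' a ha)
  obtain ⟨hlow, hhigh⟩ :
      ε ∈ {i : ℕ | (∀ k, k ≤ i → k ∈ 𝒜) ∧ (∀ k, α - i ≤ k → k ≤ α → k ∈ 𝒜)} := by
    rw [hε] at hε1 ⊢
    refine Nat.sSup_mem (Set.nonempty_iff_ne_empty.2 fun h => ?_) ⟨α, fun i hi => ?_⟩
    · rw [h, csSup_empty] at hε1
      exact absurd hε1 (by decide)
    · exact mem_Iic.1 (hA (hi.1 i le_rfl))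
  obtain ⟨p, hp, hgap⟩ := exists_natCast_eq_fdiv_add_one (l := gapLen 𝒜) hε1
  have := regA_le_succ hA (fun k hk => hlow k (mem_Iic.1 hk))
    (fun k hk => hhigh k (mem_Icc.1 hk).1 (mem_Icc.1 hk).2) hgap
  omega

/-- For smooth `𝒜` with `ε := max {i | {0,…,i} ⊆ 𝒜 and {α−i,…,α} ⊆ 𝒜}` (so `ε ≥ 1`):
`reg(𝒜) ≤ ⌊(λ(𝒜) − 1)/ε⌋ + 2`, the floor division taken in `ℤ`. -/
theorem stmt_17 (𝒜 : Finset ℕ) (hne : 𝒜.Nonempty) (h0 : 0 ∈ 𝒜)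
    (α : ℕ) (hα : α = 𝒜.max' hne) (hα2 : 2 ≤ α)
    (h1 : 1 ∈ 𝒜) (hαm1 : α - 1 ∈ 𝒜)
    (ε : ℕ)
    (hε : ε = sSup {i : ℕ | (∀ k, k ≤ i → k ∈ 𝒜) ∧ (∀ k, α - i ≤ k → k ≤ α → k ∈ 𝒜)})
    (hε1 : 1 ≤ ε) :
    (regA 𝒜 : ℤ) ≤ Int.fdiv ((gapLen 𝒜 : ℤ) - 1) (ε : ℤ) + 2 :=
  stmt_17_general 𝒜 hne α hα ε hε hε1
end
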